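/- arXiv:math/9502201 — 2 statements merged into one kernel-verified Lean document; each statement's English description precedes it below -/
import Mathlib

section
/- For integers ν₁, ν₂, ν₃ ≥ 2 with 1/ν₁ + 1/ν₂ + 1/ν₃ < 1 (hyperbolic signature), the quantity l² = q₁² + q₂² + q₃² + 2q₁q₂q₃ - 1 is strictly positive, where qⱼ = cos(π/νⱼ). -/
/-! For arbitrary angles the expression factors as `(cos c + cos (a + b)) * (cos c + cos (a - b))`.
For `a, b, c = π/νⱼ` in `(0, π/2]` hyperbolicity reads `a + b + c < π`, so
`cos (a + b) > cos (π - c) = -cos c` makes the first factor positive; the second is positive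
since `cos c ≥ 0` and `|a - b| < π/2`. -/

open Real

theorem cos_sq_add_cos_sq_add_cos_sq_add_two_mul_sub_one (a b c : ℝ) :
    cos a ^ 2 + cos b ^ 2 + cos c ^ 2 + 2 * cos a * cos b * cos c - 1 =
      (cos c + cos (a + b)) * (cos c + cos (a - b)) := by
  rw [cos_add, cos_sub]
  linear_combination (sin b ^ 2) * sin_sq_add_cos_sq a + (1 - cos a ^ 2) * sin_sq_add_cos_sq b

theorem cos_add_cos_pos_of_add_lt_pi {x c : ℝ} (hx : 0 ≤ x) (hc : 0 ≤ c) (hxc : x + c < π) :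
    0 < cos c + cos x := by
  have h : cos (π - c) < cos x := cos_lt_cos_of_nonneg_of_le_pi hx (by linarith) (by linarith)
  rw [cos_pi_sub] at h
  linarith

theorem cos_sq_add_cos_sq_add_cos_sq_add_two_mul_sub_one_pos {a b c : ℝ}
    (ha : a ∈ Set.Ioc 0 (π / 2)) (hb : b ∈ Set.Ioc 0 (π / 2)) (hc : c ∈ Set.Ioc 0 (π / 2))
    (habc : a + b + c < π) :
    0 < cos a ^ 2 + cos b ^ 2 + cos c ^ 2 + 2 * cos a * cos b * cos c - 1 := by
  obtain ⟨ha₀, ha₁⟩ := ha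
  obtain ⟨hb₀, hb₁⟩ := hb
  obtain ⟨hc₀, hc₁⟩ := hc
  rw [cos_sq_add_cos_sq_add_cos_sq_add_two_mul_sub_one]
  have hcos_c : 0 ≤ cos c := cos_nonneg_of_mem_Icc ⟨by linarith, hc₁⟩
  have hcos_sub : 0 < cos (a - b) := cos_pos_of_mem_Ioo ⟨by linarith, by linarith⟩
  exact mul_pos (cos_add_cos_pos_of_add_lt_pi (by linarith) hc₀.le (by linarith)) (by linarith)

theorem pi_div_natCast_mem_Ioc {ν : ℕ} (hν : 2 ≤ ν) : π / ν ∈ Set.Ioc 0 (π / 2) := by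
  have hν' : (2 : ℝ) ≤ ν := by exact_mod_cast hν
  exact ⟨by positivity, div_le_div_of_nonneg_left pi_pos.le two_pos hν'⟩

theorem triangle_group_hyperbolic_l_sq_pos
    (ν₁ ν₂ ν₃ : ℕ) (h₁ : 2 ≤ ν₁) (h₂ : 2 ≤ ν₂) (h₃ : 2 ≤ ν₃)
    (hhyp : (1 : ℝ) / ν₁ + 1 / ν₂ + 1 / ν₃ < 1) :
    0 < Real.cos (π / ν₁) ^ 2 + Real.cos (π / ν₂) ^ 2 + Real.cos (π / ν₃) ^ 2 +
        2 * Real.cos (π / ν₁) * Real.cos (π / ν₂) * Real.cos (π / ν₃) - 1 := by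
  have hsum : π / ν₁ + π / ν₂ + π / ν₃ < π := by
    have h := mul_lt_mul_of_pos_left hhyp pi_pos
    simpa only [mul_add, mul_one_div, mul_one] using h
  exact cos_sq_add_cos_sq_add_cos_sq_add_two_mul_sub_one_pos (pi_div_natCast_mem_Ioc h₁)
    (pi_div_natCast_mem_Ioc h₂) (pi_div_natCast_mem_Ioc h₃) hsum
end

section
/- Let qⱼ = cos(π/νⱼ), pⱼ = sin(π/νⱼ) for integers ν₁,ν₂,ν₃ ≥ 2 with hyperbolic signature, let l = √(q₁²+q₂²+q₃²+2q₁q₂q₃-1) > 0, k = (q₂+q₁q₃+q₁l)/(p₁l), h = kp₁p₂/(q₁q₂+q₃+l). Define A = [[-q₁, -kp₁],[k⁻¹p₁, -q₁]] and B = [[-q₂, -hp₂],[h⁻¹p₂, -q₂]]. Then det(A) = det(B) = 1 and trace(A·B) = -2q₃. -/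
/-!
Both determinants are `q² + p² = cos² + sin² = 1`, and the trace of `A * B` is
`2 q₁ q₂ - (k/h + h/k) p₁ p₂`. The choice of `h` makes `(k/h) p₁ p₂ = D := q₁ q₂ + q₃ + l`, while the
definition of `l` factors `(p₁ p₂)² = (1 - q₁²)(1 - q₂²)` as `D (q₁ q₂ + q₃ - l)`, so the trace
collapses to `2 q₁ q₂ - D - (q₁ q₂ + q₃ - l) = -2 q₃`. The one non-formal point is `k ≠ 0`: it follows
from `(q₂ + q₁ q₃ + q₁ l)(q₂ + q₁ q₃ - q₁ l) = p₁² (l² + 1 - q₃²)`, whose right side is positive.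
-/

open Real Matrix

section Algebra

variable {K : Type*} [Field K]

/-- The conjugate by `diag(√k, 1/√k)` of the rotation matrix with cosine `-q` and sine `p`. -/
def ellipticMatrix (q p k : K) : Matrix (Fin 2) (Fin 2) K :=
  !![-q, -k * p; k⁻¹ * p, -q]

theorem det_ellipticMatrix (q p : K) {k : K} (hk : k ≠ 0) :
    (ellipticMatrix q p k).det = q ^ 2 + p ^ 2 := by
  rw [ellipticMatrix, det_fin_two_of]
  linear_combination p ^ 2 * mul_inv_cancel₀ hk

theorem trace_ellipticMatrix_mul (q₁ p₁ k q₂ p₂ h : K) :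
    (ellipticMatrix q₁ p₁ k * ellipticMatrix q₂ p₂ h).trace
      = 2 * q₁ * q₂ - (k / h + h / k) * (p₁ * p₂) := by
  rw [ellipticMatrix, ellipticMatrix, mul_fin_two, trace_fin_two_of]
  ring

variable {q₁ q₂ q₃ p₁ p₂ l : K}

theorem mul_sub_eq_sq_mul_of_sq_eq (hl : l ^ 2 = q₁ ^ 2 + q₂ ^ 2 + q₃ ^ 2 + 2 * q₁ * q₂ * q₃ - 1)
    (hpq₁ : q₁ ^ 2 + p₁ ^ 2 = 1) :
    (q₂ + q₁ * q₃ + q₁ * l) * (q₂ + q₁ * q₃ - q₁ * l) = p₁ ^ 2 * (l ^ 2 + 1 - q₃ ^ 2) := by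
  linear_combination -(q₁ ^ 2 + p₁ ^ 2) * hl - (q₁ ^ 2 + q₂ ^ 2 + 2 * q₁ * q₂ * q₃) * hpq₁

theorem add_add_mul_ne_zero_of_sq_eq [LinearOrder K] [IsStrictOrderedRing K]
    (hl : l ^ 2 = q₁ ^ 2 + q₂ ^ 2 + q₃ ^ 2 + 2 * q₁ * q₂ * q₃ - 1)
    (hpq₁ : q₁ ^ 2 + p₁ ^ 2 = 1) (hq₃ : q₃ ^ 2 ≤ 1) (hp₁ : p₁ ≠ 0) (hl₀ : l ≠ 0) :
    q₂ + q₁ * q₃ + q₁ * l ≠ 0 := by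
  have hpos : 0 < p₁ ^ 2 * (l ^ 2 + 1 - q₃ ^ 2) :=
    mul_pos (sq_pos_of_ne_zero hp₁) (by nlinarith [sq_pos_of_ne_zero hl₀])
  intro h
  rw [← mul_sub_eq_sq_mul_of_sq_eq hl hpq₁, h, zero_mul] at hpos
  exact hpos.false

theorem add_mul_sub_eq_sq_of_sq_eq
    (hl : l ^ 2 = q₁ ^ 2 + q₂ ^ 2 + q₃ ^ 2 + 2 * q₁ * q₂ * q₃ - 1)
    (hpq₁ : q₁ ^ 2 + p₁ ^ 2 = 1) (hpq₂ : q₂ ^ 2 + p₂ ^ 2 = 1) :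
    (q₁ * q₂ + q₃ + l) * (q₁ * q₂ + q₃ - l) = (p₁ * p₂) ^ 2 := by
  linear_combination -hl - p₂ ^ 2 * hpq₁ + (q₁ ^ 2 - 1) * hpq₂

theorem trace_ellipticMatrix_mul_eq_neg_two_mul
    (hl : l ^ 2 = q₁ ^ 2 + q₂ ^ 2 + q₃ ^ 2 + 2 * q₁ * q₂ * q₃ - 1)
    (hpq₁ : q₁ ^ 2 + p₁ ^ 2 = 1) (hpq₂ : q₂ ^ 2 + p₂ ^ 2 = 1) (hp₁ : p₁ ≠ 0) (hp₂ : p₂ ≠ 0)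
    (hD : q₁ * q₂ + q₃ + l ≠ 0) {k h : K} (hk : k ≠ 0) (hh : h = k * p₁ * p₂ / (q₁ * q₂ + q₃ + l)) :
    (ellipticMatrix q₁ p₁ k * ellipticMatrix q₂ p₂ h).trace = -2 * q₃ := by
  rw [trace_ellipticMatrix_mul, hh]
  field_simp
  linear_combination add_mul_sub_eq_sq_of_sq_eq hl hpq₁ hpq₂

end Algebra

theorem sq_eq_of_eq_sqrt_of_ne_zero {l x : ℝ} (hl : l = √x) (hl₀ : l ≠ 0) : l ^ 2 = x := by
  subst hl
  exact sq_sqrt (sqrt_pos.mp (lt_of_le_of_ne (sqrt_nonneg x) (Ne.symm hl₀))).le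

theorem sin_pi_div_natCast_ne_zero {ν : ℕ} (hν : 2 ≤ ν) : sin (π / ν) ≠ 0 := by
  have hν' : (1 : ℝ) < ν := by exact_mod_cast hν
  exact (sin_pos_of_pos_of_lt_pi (by positivity) (div_lt_self pi_pos hν')).ne'

theorem canonical_generators_finite_case_general
    (ν₁ ν₂ ν₃ : ℕ) (h₂ : 2 ≤ ν₂)
    (q₁ q₂ q₃ p₁ p₂ l k h : ℝ)
    (hq₁ : q₁ = Real.cos (π / ν₁)) (hq₂ : q₂ = Real.cos (π / ν₂))
    (hq₃ : q₃ = Real.cos (π / ν₃))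
    (hp₁ : p₁ = Real.sin (π / ν₁)) (hp₂ : p₂ = Real.sin (π / ν₂))
    (hl : l = Real.sqrt (q₁ ^ 2 + q₂ ^ 2 + q₃ ^ 2 + 2 * q₁ * q₂ * q₃ - 1))
    (hk : k = (q₂ + q₁ * q₃ + q₁ * l) / (p₁ * l))
    (hh : h = k * p₁ * p₂ / (q₁ * q₂ + q₃ + l))
    (hden₁ : p₁ * l ≠ 0) (hden₂ : q₁ * q₂ + q₃ + l ≠ 0) :
    (!![-q₁, -k * p₁; k⁻¹ * p₁, -q₁] : Matrix (Fin 2) (Fin 2) ℝ).det = 1 ∧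
    (!![-q₂, -h * p₂; h⁻¹ * p₂, -q₂] : Matrix (Fin 2) (Fin 2) ℝ).det = 1 ∧
    ((!![-q₁, -k * p₁; k⁻¹ * p₁, -q₁] : Matrix (Fin 2) (Fin 2) ℝ) *
        !![-q₂, -h * p₂; h⁻¹ * p₂, -q₂]).trace = -2 * q₃ := by
  obtain ⟨hp₁₀, hl₀⟩ := mul_ne_zero_iff.mp hden₁
  have hp₂₀ : p₂ ≠ 0 := hp₂ ▸ sin_pi_div_natCast_ne_zero h₂
  have hpq₁ : q₁ ^ 2 + p₁ ^ 2 = 1 := hq₁ ▸ hp₁ ▸ cos_sq_add_sin_sq _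
  have hpq₂ : q₂ ^ 2 + p₂ ^ 2 = 1 := hq₂ ▸ hp₂ ▸ cos_sq_add_sin_sq _
  have hl2 := sq_eq_of_eq_sqrt_of_ne_zero hl hl₀
  have hk₀ : k ≠ 0 := hk ▸ div_ne_zero
    (add_add_mul_ne_zero_of_sq_eq hl2 hpq₁ (hq₃ ▸ cos_sq_le_one _) hp₁₀ hl₀) hden₁
  have hh₀ : h ≠ 0 := hh ▸ div_ne_zero (mul_ne_zero (mul_ne_zero hk₀ hp₁₀) hp₂₀) hden₂
  refine ⟨?_, ?_, ?_⟩
  · rw [← ellipticMatrix, det_ellipticMatrix _ _ hk₀, hpq₁]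
  · rw [← ellipticMatrix, det_ellipticMatrix _ _ hh₀, hpq₂]
  · exact trace_ellipticMatrix_mul_eq_neg_two_mul hl2 hpq₁ hpq₂ hp₁₀ hp₂₀ hden₂ hk₀ hh

theorem canonical_generators_finite_case
    (ν₁ ν₂ ν₃ : ℕ) (h₁ : 2 ≤ ν₁) (h₂ : 2 ≤ ν₂) (h₃ : 2 ≤ ν₃)
    (hhyp : (1 : ℝ) / ν₁ + 1 / ν₂ + 1 / ν₃ < 1)
    (q₁ q₂ q₃ p₁ p₂ l k h : ℝ)
    (hq₁ : q₁ = Real.cos (π / ν₁)) (hq₂ : q₂ = Real.cos (π / ν₂))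
    (hq₃ : q₃ = Real.cos (π / ν₃))
    (hp₁ : p₁ = Real.sin (π / ν₁)) (hp₂ : p₂ = Real.sin (π / ν₂))
    (hl : l = Real.sqrt (q₁ ^ 2 + q₂ ^ 2 + q₃ ^ 2 + 2 * q₁ * q₂ * q₃ - 1))
    (hlpos : 0 < l)
    (hk : k = (q₂ + q₁ * q₃ + q₁ * l) / (p₁ * l))
    (hh : h = k * p₁ * p₂ / (q₁ * q₂ + q₃ + l))
    (hden₁ : p₁ * l ≠ 0) (hden₂ : q₁ * q₂ + q₃ + l ≠ 0) :
    (!![-q₁, -k * p₁; k⁻¹ * p₁, -q₁] : Matrix (Fin 2) (Fin 2) ℝ).det = 1 ∧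
    (!![-q₂, -h * p₂; h⁻¹ * p₂, -q₂] : Matrix (Fin 2) (Fin 2) ℝ).det = 1 ∧
    ((!![-q₁, -k * p₁; k⁻¹ * p₁, -q₁] : Matrix (Fin 2) (Fin 2) ℝ) *
        !![-q₂, -h * p₂; h⁻¹ * p₂, -q₂]).trace = -2 * q₃ :=
  canonical_generators_finite_case_general ν₁ ν₂ ν₃ h₂ q₁ q₂ q₃ p₁ p₂ l k h hq₁ hq₂ hq₃ hp₁ hp₂ hl
    hk hh hden₁ hden₂
end
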